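/- Let f : ℝ₊ × X → X be a continuous semiflow on a metric space X, x ∈ X with minimal center of attraction C_x, and θ > 0. Then C_x = { y ∈ X : for every neighborhood U of y, limsup_{N→∞, N∈ℕ} (1/N) ∫₀^{Nθ} 1_U(f(t,x)) dt > 0 }. -/

import Mathlib

/-!
If `y ∈ C_x` and some neighbourhood `U` of `y` had zero sampled upper density, then `U`, and
hence a ball `B(y, r)`, would be visited with density zero in continuous time as well, because
`[0, T]` is squeezed between `[0, Nθ]` and `[0, 2Nθ]` for `N = ⌈T/θ⌉`. Removing `B(y, r/2)`
from `C_x` would then leave a smaller closed center of attraction, contradicting minimality.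
Conversely, a point outside the closed set `C_x` has a ball around it disjoint from an
`ε`-thickening of `C_x`, which the motion occupies with density one, so that ball is visited
with density zero.
-/

open MeasureTheory Filter Metric Set Topology
open scoped Classical

noncomputable section

/-- The set `S ⊆ ℝ` has density `α` in `[0,∞)`. -/
def HasDens (S : Set ℝ) (α : ℝ) : Prop :=
  Filter.Tendsto (fun T : ℝ => (MeasureTheory.volume (S ∩ Set.Icc 0 T)).toReal / T)
    Filter.atTop (nhds α)

/-- `f` is a continuous semiflow on `X` (time in `[0,∞)`). -/
def IsSemiflow {X : Type*} [MetricSpace X] (f : ℝ → X → X) : Prop :=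
  ContinuousOn (fun p : ℝ × X => f p.1 p.2) (Set.Ici 0 ×ˢ Set.univ) ∧
  (∀ x : X, f 0 x = x) ∧
  (∀ s t : ℝ, 0 ≤ s → 0 ≤ t → ∀ x : X, f s (f t x) = f (s + t) x)

/-- `C` is a center of attraction of the motion `f (t, x)`. -/
def IsCtr {X : Type*} [MetricSpace X] (f : ℝ → X → X) (x : X) (C : Set X) : Prop :=
  IsClosed C ∧ ∀ ε > (0 : ℝ), HasDens {t : ℝ | 0 ≤ t ∧ f t x ∈ Metric.thickening ε C} 1

/-- `C` is the minimal center of attraction of the motion `f (t, x)`. -/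
def IsMCA {X : Type*} [MetricSpace X] (f : ℝ → X → X) (x : X) (C : Set X) : Prop :=
  IsCtr f x C ∧ ∀ C' ⊆ C, IsCtr f x C' → C' = C

def fracIcc (S : Set ℝ) (T : ℝ) : ℝ := volume.real (S ∩ Icc 0 T) / T

section Density

variable {S S' A B : Set ℝ} {T : ℝ} {α : ℝ}

lemma hasDens_iff : HasDens S α ↔ Tendsto (fracIcc S) atTop (𝓝 α) := Iff.rfl

lemma volume_inter_Icc_ne_top (S : Set ℝ) (T : ℝ) : volume (S ∩ Icc 0 T) ≠ ⊤ :=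
  measure_ne_top_of_subset inter_subset_right (by simp [Real.volume_Icc])

lemma fracIcc_nonneg (S : Set ℝ) (hT : 0 ≤ T) : 0 ≤ fracIcc S T := by
  unfold fracIcc; positivity

lemma fracIcc_le_one (S : Set ℝ) (hT : 0 ≤ T) : fracIcc S T ≤ 1 := by
  refine div_le_one_of_le₀ ?_ hT
  calc volume.real (S ∩ Icc 0 T) ≤ volume.real (Icc (0 : ℝ) T) :=
        measureReal_mono inter_subset_right (by simp [Real.volume_Icc])
    _ = T := by rw [Real.volume_real_Icc_of_le hT, sub_zero]

lemma fracIcc_mono (h : S ⊆ S') (hT : 0 ≤ T) : fracIcc S T ≤ fracIcc S' T :=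
  div_le_div_of_nonneg_right
    (measureReal_mono (inter_subset_inter_left _ h) (volume_inter_Icc_ne_top _ _)) hT

lemma fracIcc_union_le (S S' : Set ℝ) (hT : 0 ≤ T) :
    fracIcc (S ∪ S') T ≤ fracIcc S T + fracIcc S' T := by
  simp only [fracIcc, ← add_div, union_inter_distrib_right]
  exact div_le_div_of_nonneg_right (measureReal_union_le _ _) hT

lemma fracIcc_add_fracIcc_le_one (hd : Disjoint B S) (hS : MeasurableSet S) (hT : 0 ≤ T) :
    fracIcc B T + fracIcc S T ≤ 1 := by
  rw [fracIcc, fracIcc, ← add_div, ← measureReal_union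
    (hd.mono inter_subset_left inter_subset_left) (hS.inter measurableSet_Icc)
    (volume_inter_Icc_ne_top _ _) (volume_inter_Icc_ne_top _ _), ← union_inter_distrib_right]
  exact fracIcc_le_one _ hT

lemma fracIcc_le_mul_fracIcc (hT : 0 < T) {T' : ℝ} (hTT' : T ≤ T') :
    fracIcc S T ≤ T' / T * fracIcc S T' := by
  have hT' : 0 < T' := hT.trans_le hTT'
  calc fracIcc S T ≤ volume.real (S ∩ Icc 0 T') / T :=
        div_le_div_of_nonneg_right (measureReal_mono
          (inter_subset_inter_right _ (Icc_subset_Icc_right hTT')) (volume_inter_Icc_ne_top _ _))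
          hT.le
    _ = T' / T * fracIcc S T' := by rw [fracIcc]; field_simp

lemma HasDens.one_of_subset (hS : HasDens S 1) (h : S ⊆ S') : HasDens S' 1 :=
  tendsto_of_tendsto_of_tendsto_of_le_of_le' hS tendsto_const_nhds
    (eventually_ge_atTop 0 |>.mono fun _ hT => fracIcc_mono h hT)
    (eventually_ge_atTop 0 |>.mono fun _ hT => fracIcc_le_one _ hT)

lemma HasDens.zero_of_subset (hS' : HasDens S' 0) (h : S ⊆ S') : HasDens S 0 :=
  squeeze_zero' (eventually_ge_atTop 0 |>.mono fun _ hT => fracIcc_nonneg _ hT)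
    (eventually_ge_atTop 0 |>.mono fun _ hT => fracIcc_mono h hT) hS'

lemma HasDens.one_of_subset_union (hA : HasDens A 1) (h : A ⊆ S ∪ B) (hB : HasDens B 0) :
    HasDens S 1 := by
  have hlower : Tendsto (fun T => fracIcc A T - fracIcc B T) atTop (𝓝 1) := by
    simpa using (hasDens_iff.1 hA).sub (hasDens_iff.1 hB)
  rw [hasDens_iff]
  refine tendsto_of_tendsto_of_tendsto_of_le_of_le' hlower tendsto_const_nhds ?_
    (eventually_ge_atTop 0 |>.mono fun _ hT => fracIcc_le_one _ hT)
  filter_upwards [eventually_ge_atTop 0] with T hT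
  linarith [fracIcc_mono h hT, fracIcc_union_le S B hT]

lemma HasDens.zero_of_disjoint (hS : HasDens S 1) (hSm : MeasurableSet S) (hd : Disjoint B S) :
    HasDens B 0 := by
  have hupper : Tendsto (fun T => 1 - fracIcc S T) atTop (𝓝 0) := by
    simpa using (tendsto_const_nhds (x := (1 : ℝ))).sub (hasDens_iff.1 hS)
  rw [hasDens_iff]
  refine squeeze_zero' (eventually_ge_atTop 0 |>.mono fun _ hT => fracIcc_nonneg _ hT) ?_ hupper
  filter_upwards [eventually_ge_atTop 0] with T hT
  linarith [fracIcc_add_fracIcc_le_one hd hSm hT]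

lemma hasDens_zero_iff_tendsto_nat_mul {θ : ℝ} (hθ : 0 < θ) :
    HasDens S 0 ↔ Tendsto (fun N : ℕ => fracIcc S (N * θ)) atTop (𝓝 0) := by
  have hNθ : Tendsto (fun N : ℕ => (N : ℝ) * θ) atTop atTop :=
    tendsto_natCast_atTop_atTop.atTop_mul_const hθ
  refine ⟨fun h => Tendsto.comp h hNθ, fun h => ?_⟩
  have hceil : Tendsto (fun T : ℝ => ⌈T / θ⌉₊) atTop atTop :=
    tendsto_nat_ceil_atTop.comp (tendsto_id.atTop_div_const hθ)
  refine squeeze_zero' (eventually_ge_atTop 0 |>.mono fun _ hT => fracIcc_nonneg _ hT)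
    (g := fun T => 2 * fracIcc S (⌈T / θ⌉₊ * θ)) ?_ (by simpa using (h.comp hceil).const_mul 2)
  filter_upwards [eventually_ge_atTop θ] with T hT
  have hT0 : 0 < T := hθ.trans_le hT
  have hle : T ≤ ⌈T / θ⌉₊ * θ := (div_le_iff₀ hθ).1 (Nat.le_ceil _)
  have hlt : ⌈T / θ⌉₊ * θ < T + θ := by
    have := Nat.ceil_lt_add_one (div_nonneg hT0.le hθ.le)
    rwa [← lt_div_iff₀ hθ, add_div, div_self hθ.ne']
  calc fracIcc S T ≤ ⌈T / θ⌉₊ * θ / T * fracIcc S (⌈T / θ⌉₊ * θ) := fracIcc_le_mul_fracIcc hT0 hle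
    _ ≤ 2 * fracIcc S (⌈T / θ⌉₊ * θ) := by
      gcongr
      · exact fracIcc_nonneg _ (hT0.le.trans hle)
      · rw [div_le_iff₀ hT0]; linarith

end Density

lemma zero_lt_limsup_iff_not_tendsto {u : ℕ → ℝ} (h0 : ∀ n, 0 ≤ u n) (hb : BddAbove (range u)) :
    0 < limsup u atTop ↔ ¬ Tendsto u atTop (𝓝 0) := by
  have hbdd : IsBoundedUnder (· ≤ ·) atTop u := hb.isBoundedUnder_of_range
  have hbdd' : IsBoundedUnder (· ≥ ·) atTop u := isBoundedUnder_of ⟨0, h0⟩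
  refine ⟨fun hpos h => hpos.ne' h.limsup_eq, fun h => not_le.1 fun hle => h ?_⟩
  exact tendsto_of_le_liminf_of_limsup_le
    (le_liminf_of_le hbdd.isCoboundedUnder_ge (.of_forall h0)) hle hbdd hbdd'

section Visits

variable {X : Type*} {f : ℝ → X → X} {x : X}

def visits (f : ℝ → X → X) (x : X) (U : Set X) : Set ℝ := {t | 0 ≤ t ∧ f t x ∈ U}

lemma visits_mono {U V : Set X} (h : U ⊆ V) : visits f x U ⊆ visits f x V :=
  fun _ ht => ⟨ht.1, h ht.2⟩

lemma visits_union (U V : Set X) : visits f x (U ∪ V) = visits f x U ∪ visits f x V := by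
  ext t; simp only [visits, mem_ofPred_eq, mem_union]; tauto

lemma Disjoint.visits {U V : Set X} (h : Disjoint U V) : Disjoint (visits f x U) (visits f x V) :=
  disjoint_left.2 fun _ hU hV => disjoint_left.1 h hU.2 hV.2

lemma visits_inter_Icc (U : Set X) (a : ℝ) :
    visits f x U ∩ Icc 0 a = {t ∈ Icc 0 a | f t x ∈ U} := by
  ext t; simp only [visits, mem_inter_iff, mem_ofPred_eq, mem_Icc]; tauto

lemma zero_lt_limsup_iff_not_hasDens_zero {θ : ℝ} (hθ : 0 < θ) (U : Set X) :
    0 < limsup (fun N : ℕ => (volume {t ∈ Icc 0 ((N : ℝ) * θ) | f t x ∈ U}).toReal / N) atTop ↔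
      ¬ HasDens (visits f x U) 0 := by
  have hseq : (fun N : ℕ => (volume {t ∈ Icc 0 ((N : ℝ) * θ) | f t x ∈ U}).toReal / N) =
      fun N : ℕ => θ * fracIcc (visits f x U) (N * θ) := by
    ext N
    rw [fracIcc, visits_inter_Icc, measureReal_def]
    field_simp
  have hnonneg : ∀ N : ℕ, 0 ≤ fracIcc (visits f x U) (N * θ) :=
    fun N => fracIcc_nonneg _ (by positivity)
  have hbdd : ∀ N : ℕ, θ * fracIcc (visits f x U) (N * θ) ≤ θ :=
    fun N => mul_le_of_le_one_right hθ.le (fracIcc_le_one _ (by positivity))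
  have hscale : Tendsto (fun N : ℕ => θ * fracIcc (visits f x U) (N * θ)) atTop (𝓝 0) ↔
      Tendsto (fun N : ℕ => fracIcc (visits f x U) (N * θ)) atTop (𝓝 0) := by
    simpa only [smul_eq_mul, mul_zero] using
      tendsto_const_smul_iff₀ (l := atTop) (a := (0 : ℝ)) hθ.ne'
  rw [hseq, zero_lt_limsup_iff_not_tendsto (fun N => mul_nonneg hθ.le (hnonneg N))
    ⟨θ, forall_mem_range.2 hbdd⟩, hscale, hasDens_zero_iff_tendsto_nat_mul hθ]

lemma measurableSet_visits [TopologicalSpace X] (hcont : ContinuousOn (fun t => f t x) (Ici 0))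
    {U : Set X} (hU : IsOpen U) : MeasurableSet (visits f x U) := by
  obtain ⟨V, hV, hVeq⟩ := continuousOn_iff'.1 hcont U hU
  have : visits f x U = V ∩ Ici 0 := by
    rw [← hVeq]
    ext t
    simp only [visits, mem_ofPred_eq, mem_inter_iff, mem_preimage, mem_Ici]
    tauto
  rw [this]
  exact hV.measurableSet.inter measurableSet_Ici

end Visits

section Thickening

variable {X : Type*} [PseudoMetricSpace X] {C : Set X} {y : X}

lemma thickening_subset_thickening_diff_ball_union_ball {δ s r : ℝ}
    (h : δ + s ≤ r) : thickening δ C ⊆ thickening δ (C \ ball y s) ∪ ball y r := by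
  intro z hz
  obtain ⟨c, hcC, hzc⟩ := mem_thickening_iff.1 hz
  by_cases hc : c ∈ ball y s
  · exact Or.inr (mem_ball.2 (by linarith [dist_triangle z c y, mem_ball.1 hc]))
  · exact Or.inl (mem_thickening_iff.2 ⟨c, ⟨hcC, hc⟩, hzc⟩)

lemma disjoint_ball_thickening {δ δ' r : ℝ} (h : Disjoint (ball y r) C)
    (hδ : δ + δ' ≤ r) : Disjoint (ball y δ) (thickening δ' C) := by
  refine disjoint_left.2 fun z hz hzC => ?_
  obtain ⟨c, hcC, hzc⟩ := mem_thickening_iff.1 hzC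
  refine disjoint_left.1 h (mem_ball.2 ?_) hcC
  linarith [dist_triangle c z y, dist_comm c z, mem_ball.1 hz]

end Thickening

section Semiflow

variable {X : Type*} [MetricSpace X] {f : ℝ → X → X} {x : X}

lemma IsSemiflow.continuousOn_orbit (hf : IsSemiflow f) (x : X) :
    ContinuousOn (fun t => f t x) (Ici 0) :=
  hf.1.comp (continuous_id.prodMk continuous_const).continuousOn
    fun _ ht => ⟨ht, mem_univ _⟩

lemma IsCtr.sdiff_ball {C : Set X} (hC : IsCtr f x C) {y : X} {r : ℝ} (hr : 0 < r)
    (hB : HasDens (visits f x (ball y r)) 0) : IsCtr f x (C \ ball y (r / 2)) := by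
  refine ⟨hC.1.sdiff isOpen_ball, fun ε hε => ?_⟩
  have hδ : 0 < min ε (r / 2) := lt_min hε (half_pos hr)
  have hsub : visits f x (thickening (min ε (r / 2)) C) ⊆
      visits f x (thickening (min ε (r / 2)) (C \ ball y (r / 2))) ∪ visits f x (ball y r) :=
    (visits_mono (thickening_subset_thickening_diff_ball_union_ball
      (by linarith [min_le_right ε (r / 2)]))).trans (visits_union _ _).subset
  exact ((hC.2 _ hδ).one_of_subset_union hsub hB).one_of_subset
    (visits_mono (thickening_mono (min_le_left _ _) _))

lemma IsMCA.not_hasDens_zero_visits {C : Set X} (hC : IsMCA f x C) {y : X} (hy : y ∈ C)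
    {U : Set X} (hU : U ∈ 𝓝 y) : ¬ HasDens (visits f x U) 0 := by
  intro hU0
  obtain ⟨r, hr, hrU⟩ := Metric.mem_nhds_iff.1 hU
  have hC' := hC.2 _ sdiff_subset (hC.1.sdiff_ball hr (hU0.zero_of_subset (visits_mono hrU)))
  have hy' : y ∈ C \ ball y (r / 2) := by rw [hC']; exact hy
  exact hy'.2 (mem_ball_self (half_pos hr))

lemma IsCtr.exists_hasDens_zero_visits {C : Set X} (hC : IsCtr f x C)
    (hcont : ContinuousOn (fun t => f t x) (Ici 0)) {y : X} (hy : y ∉ C) :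
    ∃ U ∈ 𝓝 y, HasDens (visits f x U) 0 := by
  obtain ⟨r, hr, hrC⟩ := Metric.isOpen_iff.1 hC.1.isOpen_compl y hy
  refine ⟨ball y (r / 2), ball_mem_nhds y (half_pos hr), ?_⟩
  exact (hC.2 (r / 2) (half_pos hr)).zero_of_disjoint
    (measurableSet_visits hcont isOpen_thickening)
    (disjoint_ball_thickening (subset_compl_iff_disjoint_right.1 hrC)
      (add_halves r).le).visits

end Semiflow

theorem mca_eq_theta {X : Type*} [MetricSpace X]
    (f : ℝ → X → X) (hf : IsSemiflow f) (x : X) (C : Set X) (hC : IsMCA f x C)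
    (θ : ℝ) (hθ : 0 < θ) :
    C = {y : X | ∀ U ∈ nhds y,
      0 < Filter.limsup
        (fun N : ℕ =>
          (MeasureTheory.volume {t ∈ Set.Icc 0 ((N : ℝ) * θ) | f t x ∈ U}).toReal / N)
        Filter.atTop} := by
  ext y
  simp only [mem_ofPred_eq, zero_lt_limsup_iff_not_hasDens_zero hθ]
  refine ⟨fun hy U hU => hC.not_hasDens_zero_visits hy hU, fun hy => ?_⟩
  by_contra hyC
  obtain ⟨U, hU, hU0⟩ := hC.1.exists_hasDens_zero_visits (hf.continuousOn_orbit x) hyC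
  exact hy U hU hU0
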